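/- arXiv:2110.14818 — 5 statements merged into one kernel-verified Lean document; each statement's English description precedes it below -/
import Mathlib

section
/- Let S and A be finite nonempty sets, let p : S × A × S → ℝ be a transition kernel satisfying p(s'|s,a) ≥ 0 and ∑_{s'∈S} p(s'|s,a) = 1 for all (s,a), let r : S × A → ℝ be an expected-reward function, let γ ∈ [0,1) be a discount factor, let π₀ : S × A → ℝ satisfy π₀(a|s) > 0 for all a and ∑_{a∈A} π₀(a|s) = 1 for every s, and let w > 0. Define the soft Bellman operator B_w on functions Q : S × A → ℝ by B_w[Q](s,a) = r(s,a) + γ · ∑_{s'∈S} p(s'|s,a) · w·log(∑_{a'∈A} π₀(a'|s')·exp(Q(s',a')/w)). Then for any two functions Q₁, Q₂ : S × A → ℝ, max_{(s,a)∈S×A} |B_w[Q₁](s,a) − B_w[Q₂](s,a)| ≤ γ · max_{(s,a)∈S×A} |Q₁(s,a) − Q₂(s,a)|. -/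
/-!
Mellowmax with a positive prior is monotone and commutes with adding constants, hence it is
1-Lipschitz for the sup norm. Averaging over the next state with a probability kernel does not
increase the sup norm, and the discount contributes the factor `γ`.
-/

/-- The soft (mellowmax) Bellman operator with transition kernel `p`, reward `r`,
discount `γ`, prior `π₀` and temperature `w`. -/
noncomputable def softBellman {S A : Type*} [Fintype S] [Fintype A]
    (p : S → A → S → ℝ) (r : S → A → ℝ) (γ : ℝ) (π₀ : S → A → ℝ) (w : ℝ)
    (Q : S → A → ℝ) : S → A → ℝ :=
  fun s a => r s a +
    γ * ∑ s', p s a s' * (w * Real.log (∑ a', π₀ s' a' * Real.exp (Q s' a' / w)))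

open Finset

noncomputable def mellowmax {A : Type*} [Fintype A] (π : A → ℝ) (w : ℝ) (q : A → ℝ) : ℝ :=
  w * Real.log (∑ a, π a * Real.exp (q a / w))

section Mellowmax

variable {A : Type*} [Fintype A] [Nonempty A] {π : A → ℝ} {w : ℝ}

lemma sum_mul_exp_pos (hπ : ∀ a, 0 < π a) (q : A → ℝ) :
    0 < ∑ a, π a * Real.exp (q a / w) :=
  sum_pos (fun a _ => mul_pos (hπ a) (Real.exp_pos _)) univ_nonempty

lemma mellowmax_mono (hπ : ∀ a, 0 < π a) (hw : 0 < w) {q₁ q₂ : A → ℝ} (h : q₁ ≤ q₂) :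
    mellowmax π w q₁ ≤ mellowmax π w q₂ := by
  refine mul_le_mul_of_nonneg_left (Real.log_le_log (sum_mul_exp_pos hπ q₁) ?_) hw.le
  gcongr with a
  · exact (hπ a).le
  · exact h a

lemma mellowmax_add_const (hπ : ∀ a, 0 < π a) (hw : w ≠ 0) (q : A → ℝ) (c : ℝ) :
    mellowmax π w (fun a => q a + c) = mellowmax π w q + c := by
  have hsum : ∑ a, π a * Real.exp ((q a + c) / w) =
      Real.exp (c / w) * ∑ a, π a * Real.exp (q a / w) := by
    rw [mul_sum]
    refine sum_congr rfl fun a _ => ?_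
    rw [add_div, Real.exp_add]
    ring
  rw [mellowmax, hsum, Real.log_mul (Real.exp_pos _).ne' (sum_mul_exp_pos hπ q).ne',
    Real.log_exp, mul_add, mul_div_cancel₀ _ hw, add_comm c, mellowmax]

lemma mellowmax_le_add_of_le_add (hπ : ∀ a, 0 < π a) (hw : 0 < w) {q₁ q₂ : A → ℝ} {c : ℝ}
    (h : ∀ a, q₁ a ≤ q₂ a + c) : mellowmax π w q₁ ≤ mellowmax π w q₂ + c :=
  mellowmax_add_const hπ hw.ne' q₂ c ▸ mellowmax_mono hπ hw h

lemma abs_mellowmax_sub_le (hπ : ∀ a, 0 < π a) (hw : 0 < w) {q₁ q₂ : A → ℝ} {c : ℝ}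
    (h : ∀ a, |q₁ a - q₂ a| ≤ c) : |mellowmax π w q₁ - mellowmax π w q₂| ≤ c := by
  simp only [abs_sub_le_iff, sub_le_iff_le_add'] at h ⊢
  exact ⟨mellowmax_le_add_of_le_add hπ hw fun a => (h a).1,
    mellowmax_le_add_of_le_add hπ hw fun a => (h a).2⟩

end Mellowmax

lemma abs_sum_mul_le_of_abs_le {ι : Type*} (s : Finset ι) {p f : ι → ℝ} {c : ℝ}
    (hp : ∀ i ∈ s, 0 ≤ p i) (hf : ∀ i ∈ s, |f i| ≤ c) :
    |∑ i ∈ s, p i * f i| ≤ (∑ i ∈ s, p i) * c :=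
  calc |∑ i ∈ s, p i * f i| ≤ ∑ i ∈ s, |p i * f i| := abs_sum_le_sum_abs _ _
    _ ≤ ∑ i ∈ s, p i * c := sum_le_sum fun i hi => by
        rw [abs_mul, abs_of_nonneg (hp i hi)]
        exact mul_le_mul_of_nonneg_left (hf i hi) (hp i hi)
    _ = (∑ i ∈ s, p i) * c := (sum_mul _ _ _).symm

section SoftBellman

variable {S A : Type*} [Fintype S] [Fintype A]

lemma softBellman_eq (p : S → A → S → ℝ) (r : S → A → ℝ) (γ : ℝ) (π₀ : S → A → ℝ) (w : ℝ)
    (Q : S → A → ℝ) (s : S) (a : A) :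
    softBellman p r γ π₀ w Q s a = r s a + γ * ∑ s', p s a s' * mellowmax (π₀ s') w (Q s') :=
  rfl

lemma abs_softBellman_sub_le [Nonempty A] {p : S → A → S → ℝ} (hp_nonneg : ∀ s a s', 0 ≤ p s a s')
    (hp_sum : ∀ s a, ∑ s', p s a s' = 1) (r : S → A → ℝ) {γ : ℝ} (hγ : 0 ≤ γ)
    {π₀ : S → A → ℝ} (hπ : ∀ s a, 0 < π₀ s a) {w : ℝ} (hw : 0 < w) {Q₁ Q₂ : S → A → ℝ} {c : ℝ}
    (hQ : ∀ s a, |Q₁ s a - Q₂ s a| ≤ c) (s : S) (a : A) :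
    |softBellman p r γ π₀ w Q₁ s a - softBellman p r γ π₀ w Q₂ s a| ≤ γ * c := by
  have hdiff : softBellman p r γ π₀ w Q₁ s a - softBellman p r γ π₀ w Q₂ s a =
      γ * ∑ s', p s a s' * (mellowmax (π₀ s') w (Q₁ s') - mellowmax (π₀ s') w (Q₂ s')) := by
    simp only [softBellman_eq, mul_sub, sum_sub_distrib]
    ring
  have hmm : ∀ s', |mellowmax (π₀ s') w (Q₁ s') - mellowmax (π₀ s') w (Q₂ s')| ≤ c :=
    fun s' => abs_mellowmax_sub_le (hπ s') hw (hQ s')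
  rw [hdiff, abs_mul, abs_of_nonneg hγ]
  gcongr
  simpa only [hp_sum, one_mul] using
    abs_sum_mul_le_of_abs_le univ (fun s' _ => hp_nonneg s a s') (fun s' _ => hmm s')

end SoftBellman

theorem softBellman_contraction_general
    {S A : Type*} [Fintype S] [Fintype A] [Nonempty S] [Nonempty A]
    (p : S → A → S → ℝ) (hp_nonneg : ∀ s a s', 0 ≤ p s a s')
    (hp_sum : ∀ s a, ∑ s', p s a s' = 1)
    (r : S → A → ℝ) (γ : ℝ) (hγ0 : 0 ≤ γ)
    (π₀ : S → A → ℝ) (hπpos : ∀ s a, 0 < π₀ s a)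
    (w : ℝ) (hw : 0 < w) (Q₁ Q₂ : S → A → ℝ) :
    Finset.univ.sup' Finset.univ_nonempty
        (fun sa : S × A =>
          |softBellman p r γ π₀ w Q₁ sa.1 sa.2 - softBellman p r γ π₀ w Q₂ sa.1 sa.2|) ≤
    γ * Finset.univ.sup' Finset.univ_nonempty
        (fun sa : S × A => |Q₁ sa.1 sa.2 - Q₂ sa.1 sa.2|) :=
  sup'_le _ _ fun sa _ =>
    abs_softBellman_sub_le hp_nonneg hp_sum r hγ0 hπpos hw
      (fun s a => le_sup' (fun sa : S × A => |Q₁ sa.1 sa.2 - Q₂ sa.1 sa.2|) (mem_univ (s, a)))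
      sa.1 sa.2

/-- The soft Bellman operator is a γ-contraction in the sup norm. -/
theorem softBellman_contraction
    {S A : Type*} [Fintype S] [Fintype A] [Nonempty S] [Nonempty A]
    (p : S → A → S → ℝ) (hp_nonneg : ∀ s a s', 0 ≤ p s a s')
    (hp_sum : ∀ s a, ∑ s', p s a s' = 1)
    (r : S → A → ℝ) (γ : ℝ) (hγ0 : 0 ≤ γ) (hγ1 : γ < 1)
    (π₀ : S → A → ℝ) (hπpos : ∀ s a, 0 < π₀ s a) (hπsum : ∀ s, ∑ a, π₀ s a = 1)
    (w : ℝ) (hw : 0 < w) (Q₁ Q₂ : S → A → ℝ) :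
    Finset.univ.sup' Finset.univ_nonempty
        (fun sa : S × A =>
          |softBellman p r γ π₀ w Q₁ sa.1 sa.2 - softBellman p r γ π₀ w Q₂ sa.1 sa.2|) ≤
    γ * Finset.univ.sup' Finset.univ_nonempty
        (fun sa : S × A => |Q₁ sa.1 sa.2 - Q₂ sa.1 sa.2|) :=
  softBellman_contraction_general p hp_nonneg hp_sum r γ hγ0 π₀ hπpos w hw Q₁ Q₂
end

section
/- Let A be a finite nonempty set and let π₀ : A → ℝ satisfy π₀(a) > 0 for all a ∈ A and ∑_{a∈A} π₀(a) = 1. Then for any Q : A → ℝ and any temperatures 0 < w' ≤ w, it holds that w·log(∑_{a∈A} π₀(a)·exp(Q(a)/w)) ≤ w'·log(∑_{a∈A} π₀(a)·exp(Q(a)/w')), i.e., the mellowmax value is monotone non-increasing as a function of the temperature w on (0,∞). -/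
/-! Writing `t = w' / w ∈ (0, 1]` and `x a = exp (Q a / w')`, we have `exp (Q a / w) = x a ^ t`,
so Jensen's inequality for the concave map `x ↦ x ^ t` gives `∑ π₀ a * exp (Q a / w) ≤ (∑ π₀ a * x a) ^ t`;
taking logarithms and multiplying by `w` yields the claim, since `w * t = w'`. -/

open Finset Real

theorem sum_mul_pos_of_sum_eq_one {ι : Type*} {s : Finset ι} {p f : ι → ℝ}
    (hp : ∀ i ∈ s, 0 ≤ p i) (hp₁ : ∑ i ∈ s, p i = 1) (hf : ∀ i ∈ s, 0 < f i) :
    0 < ∑ i ∈ s, p i * f i := by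
  obtain ⟨i, hi, hpi⟩ := exists_ne_zero_of_sum_ne_zero (hp₁ ▸ one_ne_zero)
  exact sum_pos' (fun j hj => mul_nonneg (hp j hj) (hf j hj).le)
    ⟨i, hi, mul_pos ((hp i hi).lt_of_ne' hpi) (hf i hi)⟩

theorem sum_mul_rpow_le_rpow_sum_mul {ι : Type*} {s : Finset ι} {p x : ι → ℝ}
    (hp : ∀ i ∈ s, 0 ≤ p i) (hp₁ : ∑ i ∈ s, p i = 1) (hx : ∀ i ∈ s, 0 ≤ x i)
    {t : ℝ} (ht₀ : 0 ≤ t) (ht₁ : t ≤ 1) :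
    ∑ i ∈ s, p i * x i ^ t ≤ (∑ i ∈ s, p i * x i) ^ t := by
  simpa only [smul_eq_mul] using (concaveOn_rpow ht₀ ht₁).le_map_sum hp hp₁ hx

theorem log_sum_mul_exp_mul_le {ι : Type*} {s : Finset ι} {p y : ι → ℝ}
    (hp : ∀ i ∈ s, 0 ≤ p i) (hp₁ : ∑ i ∈ s, p i = 1) {t : ℝ} (ht₀ : 0 < t) (ht₁ : t ≤ 1) :
    log (∑ i ∈ s, p i * exp (t * y i)) ≤ t * log (∑ i ∈ s, p i * exp (y i)) := by
  have hpow : ∀ i, exp (t * y i) = exp (y i) ^ t := fun i => by rw [← exp_mul, mul_comm]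
  rw [← log_rpow (sum_mul_pos_of_sum_eq_one hp hp₁ fun i _ => exp_pos _)]
  refine log_le_log (sum_mul_pos_of_sum_eq_one hp hp₁ fun i _ => exp_pos _) ?_
  simpa only [hpow] using
    sum_mul_rpow_le_rpow_sum_mul hp hp₁ (fun i _ => (exp_pos _).le) ht₀.le ht₁

theorem mellowmax_antitone_in_temperature_general
    {A : Type*} [Fintype A]
    (π₀ : A → ℝ) (hπpos : ∀ a, 0 < π₀ a) (hπsum : ∑ a, π₀ a = 1)
    (Q : A → ℝ) (w w' : ℝ) (hw' : 0 < w') (hww' : w' ≤ w) :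
    w * Real.log (∑ a, π₀ a * Real.exp (Q a / w)) ≤
      w' * Real.log (∑ a, π₀ a * Real.exp (Q a / w')) := by
  have hw : 0 < w := hw'.trans_le hww'
  have hrescale : ∀ a, w' / w * (Q a / w') = Q a / w := fun a => by field_simp
  have hlog := log_sum_mul_exp_mul_le (s := univ) (y := fun a => Q a / w')
    (fun a _ => (hπpos a).le) hπsum (div_pos hw' hw) (div_le_one_of_le₀ hww' hw.le)
  simp only [hrescale] at hlog
  calc w * log (∑ a, π₀ a * exp (Q a / w))
      ≤ w * (w' / w * log (∑ a, π₀ a * exp (Q a / w'))) := by gcongr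
    _ = w' * log (∑ a, π₀ a * exp (Q a / w')) := by field_simp

/-- The mellowmax value is monotone non-increasing in the temperature. -/
theorem mellowmax_antitone_in_temperature
    {A : Type*} [Fintype A] [Nonempty A]
    (π₀ : A → ℝ) (hπpos : ∀ a, 0 < π₀ a) (hπsum : ∑ a, π₀ a = 1)
    (Q : A → ℝ) (w w' : ℝ) (hw' : 0 < w') (hww' : w' ≤ w) :
    w * Real.log (∑ a, π₀ a * Real.exp (Q a / w)) ≤
      w' * Real.log (∑ a, π₀ a * Real.exp (Q a / w')) :=
  mellowmax_antitone_in_temperature_general π₀ hπpos hπsum Q w w' hw' hww'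
end

section
/- Let A be a finite nonempty set, let π₀ : A → ℝ satisfy π₀(a) > 0 for all a ∈ A and ∑_{a∈A} π₀(a) = 1, and let Q : A → ℝ. For w > 0, define the annealed Gibbs distribution p_w(a) = π₀(a)·exp(Q(a)/w) / ∑_{b∈A} π₀(b)·exp(Q(b)/w). Then for every w > 0, the function w ↦ w·log(∑_{a∈A} π₀(a)·exp(Q(a)/w)) is differentiable at w with derivative equal to −∑_{a∈A} p_w(a)·log(p_w(a)/π₀(a)), i.e., minus the Kullback–Leibler divergence of p_w from π₀ (equivalently, the entropy of p_w plus the p_w-expectation of log π₀). -/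
/-!
Writing `Z(v) = ∑ₐ π₀(a) exp(Q(a)/v)` for the partition function and `p_w` for the Gibbs
distribution, the chain rule gives `(v log Z(v))' = log Z(w) - 𝔼_{p_w}[Q]/w`. On the other hand
`log (p_w(a)/π₀(a)) = Q(a)/w - log Z(w)`, so the Kullback–Leibler divergence is
`𝔼_{p_w}[Q]/w - log Z(w)`, the same quantity with the opposite sign.
-/

open Real Finset

namespace Mellowmax

variable {A : Type*} [Fintype A] (π₀ Q : A → ℝ)

noncomputable def partitionFn (w : ℝ) : ℝ := ∑ a, π₀ a * exp (Q a / w)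

noncomputable def gibbs (w : ℝ) (a : A) : ℝ := π₀ a * exp (Q a / w) / partitionFn π₀ Q w

theorem partitionFn_pos [Nonempty A] (hπ : ∀ a, 0 < π₀ a) (w : ℝ) : 0 < partitionFn π₀ Q w :=
  sum_pos (fun a _ => mul_pos (hπ a) (exp_pos _)) univ_nonempty

theorem sum_gibbs {w : ℝ} (hZ : partitionFn π₀ Q w ≠ 0) : ∑ a, gibbs π₀ Q w a = 1 := by
  simp only [gibbs, ← sum_div]
  exact div_self hZ

theorem hasDerivAt_partitionFn {w : ℝ} (hw : w ≠ 0) :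
    HasDerivAt (partitionFn π₀ Q) (-(∑ a, π₀ a * exp (Q a / w) * Q a) / w ^ 2) w := by
  rw [neg_div, sum_div, ← sum_neg_distrib]
  refine HasDerivAt.fun_sum fun a _ => ?_
  have hQdiv : HasDerivAt (fun v => Q a / v) (-Q a / w ^ 2) w :=
    ((hasDerivAt_inv hw).const_mul (Q a)).congr_deriv (by ring)
  exact (hQdiv.exp.const_mul (π₀ a)).congr_deriv (by ring)

theorem hasDerivAt_mul_log_partitionFn {w : ℝ} (hw : w ≠ 0) (hZ : partitionFn π₀ Q w ≠ 0) :
    HasDerivAt (fun v => v * log (partitionFn π₀ Q v))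
      (log (partitionFn π₀ Q w) - ∑ a, gibbs π₀ Q w a * (Q a / w)) w := by
  have hgibbs : ∑ a, gibbs π₀ Q w a * (Q a / w) =
      (∑ a, π₀ a * exp (Q a / w) * Q a) / (w * partitionFn π₀ Q w) := by
    rw [sum_div]
    refine sum_congr rfl fun a _ => ?_
    rw [gibbs, div_mul_div_comm, mul_comm w]
  refine ((hasDerivAt_id' w).mul ((hasDerivAt_partitionFn π₀ Q hw).log hZ)).congr_deriv ?_
  rw [hgibbs]
  field_simp
  ring

theorem gibbs_mul_log_gibbs_div {w : ℝ} (hZ : partitionFn π₀ Q w ≠ 0) (a : A) :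
    gibbs π₀ Q w a * log (gibbs π₀ Q w a / π₀ a) =
      gibbs π₀ Q w a * (Q a / w) - gibbs π₀ Q w a * log (partitionFn π₀ Q w) := by
  by_cases hπa : π₀ a = 0
  · simp [gibbs, hπa]
  have hratio : gibbs π₀ Q w a / π₀ a = exp (Q a / w) / partitionFn π₀ Q w := by
    rw [gibbs, mul_div_assoc, mul_div_cancel_left₀ _ hπa]
  rw [hratio, log_div (exp_pos _).ne' hZ, log_exp, mul_sub]

theorem sum_gibbs_mul_log_gibbs_div {w : ℝ} (hZ : partitionFn π₀ Q w ≠ 0) :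
    ∑ a, gibbs π₀ Q w a * log (gibbs π₀ Q w a / π₀ a) =
      ∑ a, gibbs π₀ Q w a * (Q a / w) - log (partitionFn π₀ Q w) := by
  simp only [gibbs_mul_log_gibbs_div π₀ Q hZ]
  rw [sum_sub_distrib, ← sum_mul, sum_gibbs π₀ Q hZ, one_mul]

end Mellowmax

theorem mellowmax_hasDerivAt_neg_KL_general
    {A : Type*} [Fintype A] [Nonempty A]
    (π₀ : A → ℝ) (hπpos : ∀ a, 0 < π₀ a)
    (Q : A → ℝ)
    (p : ℝ → A → ℝ)
    (hp : ∀ w a, p w a =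
      π₀ a * Real.exp (Q a / w) / ∑ b, π₀ b * Real.exp (Q b / w))
    (w : ℝ) (hw : 0 < w) :
    HasDerivAt (fun v : ℝ => v * Real.log (∑ a, π₀ a * Real.exp (Q a / v)))
      (-∑ a, p w a * Real.log (p w a / π₀ a)) w := by
  have hpw : p w = Mellowmax.gibbs π₀ Q w := funext (hp w)
  have hZ := (Mellowmax.partitionFn_pos π₀ Q hπpos w).ne'
  rw [hpw, Mellowmax.sum_gibbs_mul_log_gibbs_div π₀ Q hZ, neg_sub]
  exact Mellowmax.hasDerivAt_mul_log_partitionFn π₀ Q hw.ne' hZ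

/-- The derivative of the mellowmax value with respect to the temperature
equals minus the KL divergence of the annealed Gibbs distribution from the prior. -/
theorem mellowmax_hasDerivAt_neg_KL
    {A : Type*} [Fintype A] [Nonempty A]
    (π₀ : A → ℝ) (hπpos : ∀ a, 0 < π₀ a) (hπsum : ∑ a, π₀ a = 1)
    (Q : A → ℝ)
    (p : ℝ → A → ℝ)
    (hp : ∀ w a, p w a =
      π₀ a * Real.exp (Q a / w) / ∑ b, π₀ b * Real.exp (Q b / w))
    (w : ℝ) (hw : 0 < w) :
    HasDerivAt (fun v : ℝ => v * Real.log (∑ a, π₀ a * Real.exp (Q a / v)))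
      (-∑ a, p w a * Real.log (p w a / π₀ a)) w :=
  mellowmax_hasDerivAt_neg_KL_general π₀ hπpos Q p hp w hw
end

section
/- Let A be a finite nonempty set, let π₀ : A → ℝ satisfy π₀(a) > 0 for all a ∈ A and ∑_{a∈A} π₀(a) = 1, and let Q : A → ℝ be non-constant (i.e., there exist a, b ∈ A with Q(a) ≠ Q(b)). Then the function w ↦ w·log(∑_{a∈A} π₀(a)·exp(Q(a)/w)) is strictly decreasing on (0, ∞). -/
/-!
For temperatures `u < v`, the weights `exp (Q a / u)` are the `(v / u)`-th powers of the weights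
`exp (Q a / v)`. Strict convexity of `x ↦ x ^ (v / u)` (Jensen, the `Q a` not all equal) gives
`(∑ π₀ a exp (Q a / v)) ^ (v / u) < ∑ π₀ a exp (Q a / u)`; taking logarithms and multiplying by `u`
is exactly `mmax_v Q < mmax_u Q`.
-/

open Real Finset Set

theorem exp_div_rpow_div {q u v : ℝ} (hu : u ≠ 0) (hv : v ≠ 0) :
    exp (q / v) ^ (v / u) = exp (q / u) := by
  rw [← exp_mul]
  congr 1
  field_simp

theorem strictAntiOn_mul_log_sum_mul_exp_div {ι : Type*} {s : Finset ι} {p Q : ι → ℝ}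
    (hp : ∀ i ∈ s, 0 < p i) (hsum : ∑ i ∈ s, p i = 1) (hQ : ∃ j ∈ s, ∃ k ∈ s, Q j ≠ Q k) :
    StrictAntiOn (fun w => w * log (∑ i ∈ s, p i * exp (Q i / w))) (Ioi 0) := by
  intro u (hu : 0 < u) v (hv : 0 < v) huv
  obtain ⟨j, hj, k, hk, hjk⟩ := hQ
  set S := ∑ i ∈ s, p i * exp (Q i / v)
  have hS : 0 < S := sum_pos (fun i hi => mul_pos (hp i hi) (exp_pos _)) ⟨j, hj⟩
  have hpow : S ^ (v / u) < ∑ i ∈ s, p i * exp (Q i / u) := by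
    have hne : exp (Q j / v) ≠ exp (Q k / v) := by
      rw [Ne, exp_eq_exp, div_left_inj' hv.ne']
      exact hjk
    have := (strictConvexOn_rpow ((one_lt_div hu).2 huv)).map_sum_lt hp hsum
      (fun i _ => (exp_pos (Q i / v)).le) ⟨j, hj, k, hk, hne⟩
    simpa only [smul_eq_mul, exp_div_rpow_div hu.ne' hv.ne'] using this
  show v * log S < u * log (∑ i ∈ s, p i * exp (Q i / u))
  calc v * log S = u * log (S ^ (v / u)) := by
        rw [log_rpow hS]
        field_simp
    _ < u * log (∑ i ∈ s, p i * exp (Q i / u)) := by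
        gcongr

theorem mellowmax_strictAntiOn_general
    {A : Type*} [Fintype A]
    (π₀ : A → ℝ) (hπpos : ∀ a, 0 < π₀ a) (hπsum : ∑ a, π₀ a = 1)
    (Q : A → ℝ) (hQ : ∃ a b : A, Q a ≠ Q b) :
    StrictAntiOn (fun w : ℝ => w * Real.log (∑ a, π₀ a * Real.exp (Q a / w)))
      (Set.Ioi (0 : ℝ)) := by
  obtain ⟨a, b, hab⟩ := hQ
  exact strictAntiOn_mul_log_sum_mul_exp_div (fun a _ => hπpos a) hπsum
    ⟨a, mem_univ a, b, mem_univ b, hab⟩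

/-- For a non-constant Q, the mellowmax value is strictly decreasing
in the temperature on (0, ∞). -/
theorem mellowmax_strictAntiOn
    {A : Type*} [Fintype A] [Nonempty A]
    (π₀ : A → ℝ) (hπpos : ∀ a, 0 < π₀ a) (hπsum : ∑ a, π₀ a = 1)
    (Q : A → ℝ) (hQ : ∃ a b : A, Q a ≠ Q b) :
    StrictAntiOn (fun w : ℝ => w * Real.log (∑ a, π₀ a * Real.exp (Q a / w)))
      (Set.Ioi (0 : ℝ)) :=
  mellowmax_strictAntiOn_general π₀ hπpos hπsum Q hQ
end

section
/- Let A be a finite nonempty set, let π₀ : A → ℝ satisfy π₀(a) > 0 for all a ∈ A and ∑_{a∈A} π₀(a) = 1, and let Q : A → ℝ. Let M = max_{a∈A} Q(a) and let S = {a ∈ A : Q(a) = M} be the set of maximizing actions. Then the limit as w → 0⁺ of (w·log(∑_{a∈A} π₀(a)·exp(Q(a)/w)) − M)/w exists and equals log(∑_{a∈S} π₀(a)); in particular, the one-sided derivative of the mellowmax value at temperature 0 equals the logarithm of the prior probability of the maximizing set. -/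
/-!
Factor out `exp (M / w)`: the normalised quantity `(w * log (∑ π₀ a * exp (Q a / w)) - M) / w`
equals `log (∑ π₀ a * exp ((Q a - M) / w))`. As `w → 0⁺`, each term with `Q a = M` stays
`π₀ a`, while each term with `Q a < M` decays like `exp (-(M - Q a) / w) → 0`; the limit is
therefore `log` of the prior mass of the maximisers, which is positive, so `log` is continuous there.
-/

open Filter Topology Real

theorem tendsto_exp_div_nhdsGT_zero_of_neg {c : ℝ} (hc : c < 0) :
    Tendsto (fun w : ℝ => exp (c / w)) (𝓝[>] 0) (𝓝 0) := by
  have hdiv : Tendsto (fun w : ℝ => c / w) (𝓝[>] 0) atBot := by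
    simpa only [div_eq_mul_inv] using tendsto_inv_nhdsGT_zero.const_mul_atTop_of_neg hc
  exact tendsto_exp_atBot.comp hdiv

theorem tendsto_sum_mul_exp_sub_div_nhdsGT_zero {ι : Type*} (s : Finset ι) (p Q : ι → ℝ)
    {M : ℝ} (hQ : ∀ a ∈ s, Q a ≤ M) :
    Tendsto (fun w : ℝ => ∑ a ∈ s, p a * exp ((Q a - M) / w)) (𝓝[>] 0)
      (𝓝 (∑ a ∈ s.filter (fun a => Q a = M), p a)) := by
  rw [Finset.sum_filter]
  refine tendsto_finsetSum s fun a ha => ?_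
  by_cases hmax : Q a = M
  · simpa only [hmax, sub_self, zero_div, exp_zero, mul_one, if_true] using tendsto_const_nhds
  · have hlt : Q a - M < 0 := sub_neg.mpr ((hQ a ha).lt_of_ne hmax)
    simpa only [hmax, if_false, mul_zero] using
      (tendsto_exp_div_nhdsGT_zero_of_neg hlt).const_mul (p a)

theorem log_sum_mul_exp_sub_div {ι : Type*} (s : Finset ι) (p Q : ι → ℝ) (M : ℝ) {w : ℝ}
    (hw : w ≠ 0) (hpos : 0 < ∑ a ∈ s, p a * exp (Q a / w)) :
    log (∑ a ∈ s, p a * exp ((Q a - M) / w))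
      = (w * log (∑ a ∈ s, p a * exp (Q a / w)) - M) / w := by
  have hfactor : ∑ a ∈ s, p a * exp ((Q a - M) / w)
      = (∑ a ∈ s, p a * exp (Q a / w)) * exp (-(M / w)) := by
    rw [Finset.sum_mul]
    refine Finset.sum_congr rfl fun a _ => ?_
    rw [mul_assoc, ← exp_add, sub_div, sub_eq_add_neg]
  rw [hfactor, log_mul hpos.ne' (exp_ne_zero _), log_exp]
  field_simp
  ring

theorem mellowmax_deriv_at_zero_general
    {A : Type*} [Fintype A] [Nonempty A]
    (π₀ : A → ℝ) (hπpos : ∀ a, 0 < π₀ a)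
    (Q : A → ℝ)
    (M : ℝ) (hM : M = Finset.univ.sup' Finset.univ_nonempty Q) :
    Tendsto
      (fun w : ℝ => (w * Real.log (∑ a, π₀ a * Real.exp (Q a / w)) - M) / w)
      (𝓝[>] 0)
      (𝓝 (Real.log (∑ a ∈ Finset.univ.filter (fun a => Q a = M), π₀ a))) := by
  have hle : ∀ a ∈ Finset.univ, Q a ≤ M := fun a ha => hM ▸ Finset.le_sup' Q ha
  have hmass : 0 < ∑ a ∈ Finset.univ.filter (fun a => Q a = M), π₀ a := by
    obtain ⟨a, ha, hQa⟩ := Finset.exists_mem_eq_sup' Finset.univ_nonempty Q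
    exact Finset.sum_pos' (fun b _ => (hπpos b).le)
      ⟨a, Finset.mem_filter.mpr ⟨ha, (hM.trans hQa).symm⟩, hπpos a⟩
  refine ((continuousAt_log hmass.ne').tendsto.comp
    (tendsto_sum_mul_exp_sub_div_nhdsGT_zero _ π₀ Q hle)).congr' ?_
  filter_upwards [self_mem_nhdsWithin] with w (hw : 0 < w)
  exact log_sum_mul_exp_sub_div _ π₀ Q M hw.ne'
    (Finset.sum_pos (fun a _ => mul_pos (hπpos a) (exp_pos _)) Finset.univ_nonempty)

/-- The one-sided derivative of the mellowmax value at temperature 0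
equals the logarithm of the prior probability of the set of maximizing actions. -/
theorem mellowmax_deriv_at_zero
    {A : Type*} [Fintype A] [Nonempty A] [DecidableEq A]
    (π₀ : A → ℝ) (hπpos : ∀ a, 0 < π₀ a) (hπsum : ∑ a, π₀ a = 1)
    (Q : A → ℝ)
    (M : ℝ) (hM : M = Finset.univ.sup' Finset.univ_nonempty Q) :
    Tendsto
      (fun w : ℝ => (w * Real.log (∑ a, π₀ a * Real.exp (Q a / w)) - M) / w)
      (𝓝[>] 0)
      (𝓝 (Real.log (∑ a ∈ Finset.univ.filter (fun a => Q a = M), π₀ a))) :=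
  mellowmax_deriv_at_zero_general π₀ hπpos Q M hM
end
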